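/- arXiv:math/0703437 — 5 statements merged into one kernel-verified Lean document; each statement's English description precedes it below -/
import Mathlib

section
/- For compositions (n₁,...,n_r) of n and (m₁,...,m_p) of m, the set of products (α × β) · γ, where α ranges over (n₁,...,n_r)-shuffles, β over (m₁,...,m_p)-shuffles, and γ over (n,m)-shuffles, equals the set of (n₁,...,n_r,m₁,...,m_p)-shuffles in S_{n+m}. -/
/-- Block product of permutations. -/
def blockProd {n m : ℕ} (σ : Equiv.Perm (Fin n)) (τ : Equiv.Perm (Fin m)) :
    Equiv.Perm (Fin (n + m)) :=
  (finSumFinEquiv : Fin n ⊕ Fin m ≃ Fin (n + m)).permCongr (Equiv.sumCongr σ τ)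

/-- `σ` is an `L`-shuffle for a composition `L = (n₁,…,n_r)`. -/
def IsCompShuffle (n : ℕ) (L : List ℕ) (σ : Equiv.Perm (Fin n)) : Prop :=
  ∀ (k : ℕ) (i j : Fin n), (L.take k).sum ≤ (i : ℕ) → (j : ℕ) < (L.take (k + 1)).sum →
    (i : ℕ) < (j : ℕ) → σ⁻¹ i < σ⁻¹ j

lemma blockProd_inv_castAdd {n m : ℕ} (α : Equiv.Perm (Fin n)) (β : Equiv.Perm (Fin m))
    (i : Fin n) : (blockProd α β)⁻¹ (Fin.castAdd m i) = Fin.castAdd m (α⁻¹ i) := by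
  apply (blockProd α β).injective
  simp [blockProd]

lemma blockProd_inv_natAdd {n m : ℕ} (α : Equiv.Perm (Fin n)) (β : Equiv.Perm (Fin m))
    (j : Fin m) : (blockProd α β)⁻¹ (Fin.natAdd n j) = Fin.natAdd n (β⁻¹ j) := by
  apply (blockProd α β).injective
  simp [blockProd]

lemma take_append_sum (L M : List ℕ) (k : ℕ) :
    ((L ++ M).take k).sum = (L.take k).sum + (M.take (k - L.length)).sum := by
  rw [List.take_append, List.sum_append]

lemma take_append_sum_of_le {L : List ℕ} (M : List ℕ) {k : ℕ} (h : k ≤ L.length) :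
    ((L ++ M).take k).sum = (L.take k).sum := by
  rw [take_append_sum]
  simp [Nat.sub_eq_zero_of_le h]

lemma take_append_sum_add (L M : List ℕ) (k : ℕ) :
    ((L ++ M).take (L.length + k)).sum = L.sum + (M.take k).sum := by
  rw [take_append_sum, List.take_of_length_le (by omega), Nat.add_sub_cancel_left]

lemma take_sum_le (L : List ℕ) (k : ℕ) : (L.take k).sum ≤ L.sum := by
  conv_rhs => rw [← List.take_append_drop k L]
  rw [List.sum_append]
  exact Nat.le_add_right _ _

/-- `(Sh(n₁,…,n_r) × Sh(m₁,…,m_p)) · Sh(n,m) = Sh(n₁,…,n_r,m₁,…,m_p)`. -/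
theorem shuffle_product_composition (L M : List ℕ)
    (hL : ∀ x ∈ L, 0 < x) (hM : ∀ x ∈ M, 0 < x)
    (δ : Equiv.Perm (Fin (L.sum + M.sum))) :
    (∃ (α : Equiv.Perm (Fin L.sum)) (β : Equiv.Perm (Fin M.sum))
        (γ : Equiv.Perm (Fin (L.sum + M.sum))),
        IsCompShuffle L.sum L α ∧ IsCompShuffle M.sum M β ∧
        IsCompShuffle (L.sum + M.sum) [L.sum, M.sum] γ ∧
        δ = blockProd α β * γ) ↔
      IsCompShuffle (L.sum + M.sum) (L ++ M) δ := by
  classical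
  constructor
  · rintro ⟨α, β, γ, hα, hβ, hγ, rfl⟩
    intro k a b ha hb hab
    simp only [mul_inv_rev, Equiv.Perm.mul_apply]
    by_cases hk : k < L.length
    · -- block inside L
      have hb1 : (b : ℕ) < (L.take (k + 1)).sum := by
        rwa [take_append_sum_of_le M hk] at hb
      have hbn : (b : ℕ) < L.sum := lt_of_lt_of_le hb1 (take_sum_le L (k + 1))
      have han : (a : ℕ) < L.sum := lt_trans hab hbn
      have ha1 : (L.take k).sum ≤ (a : ℕ) := by
        refine le_trans ?_ ha
        rw [take_append_sum]
        exact Nat.le_add_right _ _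
      have hlt := hα k ⟨a, han⟩ ⟨b, hbn⟩ ha1 hb1 hab
      have ea : a = Fin.castAdd M.sum ⟨(a : ℕ), han⟩ := Fin.ext rfl
      have eb : b = Fin.castAdd M.sum ⟨(b : ℕ), hbn⟩ := Fin.ext rfl
      rw [ea, eb, blockProd_inv_castAdd, blockProd_inv_castAdd]
      refine hγ 0 _ _ (by simp) ?_ ?_
      · simpa using (α⁻¹ ⟨(b : ℕ), hbn⟩).isLt
      · simpa using hlt
    · -- block inside M
      push_neg at hk
      have ha1 : L.sum + (M.take (k - L.length)).sum ≤ (a : ℕ) := by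
        rwa [take_append_sum, List.take_of_length_le hk] at ha
      have hk1 : k + 1 - L.length = (k - L.length) + 1 := by omega
      have hb1 : (b : ℕ) < L.sum + (M.take (k - L.length + 1)).sum := by
        rwa [take_append_sum, List.take_of_length_le (by omega), hk1] at hb
      have han : L.sum ≤ (a : ℕ) := le_trans (Nat.le_add_right _ _) ha1
      have haN := a.isLt
      have hbN := b.isLt
      have ha2 : (a : ℕ) - L.sum < M.sum := by omega
      have hb2 : (b : ℕ) - L.sum < M.sum := by omega
      have hlt := hβ (k - L.length) ⟨(a : ℕ) - L.sum, ha2⟩ ⟨(b : ℕ) - L.sum, hb2⟩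
        (by simp; omega) (by simp; omega) (by simp; omega)
      have ea : a = Fin.natAdd L.sum ⟨(a : ℕ) - L.sum, ha2⟩ := Fin.ext (by simp; omega)
      have eb : b = Fin.natAdd L.sum ⟨(b : ℕ) - L.sum, hb2⟩ := Fin.ext (by simp; omega)
      rw [ea, eb, blockProd_inv_natAdd, blockProd_inv_natAdd]
      refine hγ 1 _ _ (by simp) ?_ ?_
      · simpa using (Fin.natAdd L.sum (β⁻¹ ⟨(b : ℕ) - L.sum, hb2⟩)).isLt
      · simp only [Fin.lt_def, Fin.coe_natAdd]
        exact Nat.add_lt_add_left hlt _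
  · intro hδ
    set S : Finset (Fin (L.sum + M.sum)) :=
      Finset.univ.filter (fun x => (δ x : ℕ) < L.sum) with hSdef
    have hmemS : ∀ x, x ∈ S ↔ (δ x : ℕ) < L.sum := by
      intro x; simp [hSdef]
    have hScard : S.card = L.sum := by
      have himg : S = Finset.image (fun i : Fin L.sum => δ⁻¹ (Fin.castAdd M.sum i))
          Finset.univ := by
        ext x
        simp only [Finset.mem_image, Finset.mem_univ, true_and, hmemS]
        constructor
        · intro h
          refine ⟨⟨(δ x : ℕ), h⟩, ?_⟩
          have : Fin.castAdd M.sum ⟨(δ x : ℕ), h⟩ = δ x := Fin.ext rfl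
          rw [this, Equiv.Perm.inv_def, Equiv.symm_apply_apply]
        · rintro ⟨i, rfl⟩
          simp
      rw [himg, Finset.card_image_of_injective, Finset.card_univ, Fintype.card_fin]
      intro x y hxy
      have h2 : Fin.castAdd M.sum x = Fin.castAdd M.sum y := (δ⁻¹).injective hxy
      exact Fin.castAdd_inj.mp h2
    have hSccard : Sᶜ.card = M.sum := by
      rw [Finset.card_compl, hScard, Fintype.card_fin]
      omega
    set e := S.orderIsoOfFin hScard with he
    set f := Sᶜ.orderIsoOfFin hSccard with hf
    set fc : Fin M.sum ≃ {x : Fin (L.sum + M.sum) // ¬ x ∈ S} :=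
      f.toEquiv.trans (Equiv.subtypeEquivRight (fun x => Finset.mem_compl)) with hfc
    set γi : Fin (L.sum + M.sum) ≃ Fin (L.sum + M.sum) :=
      finSumFinEquiv.symm.trans ((Equiv.sumCongr e.toEquiv fc).trans
        (Equiv.sumCompl (· ∈ S))) with hγi
    have hγl : ∀ i : Fin L.sum, γi (Fin.castAdd M.sum i) = (e i : Fin (L.sum + M.sum)) := by
      intro i
      show (Equiv.sumCompl (· ∈ S))
        ((Equiv.sumCongr e.toEquiv fc) (finSumFinEquiv.symm (Fin.castAdd M.sum i))) = _
      rw [finSumFinEquiv_symm_apply_castAdd]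
      simp
    have hγr : ∀ j : Fin M.sum, γi (Fin.natAdd L.sum j) = (f j : Fin (L.sum + M.sum)) := by
      intro j
      show (Equiv.sumCompl (· ∈ S))
        ((Equiv.sumCongr e.toEquiv fc) (finSumFinEquiv.symm (Fin.natAdd L.sum j))) = _
      rw [finSumFinEquiv_symm_apply_natAdd]
      simp [hfc]
    have hkeyS : ∀ (x : Fin (L.sum + M.sum)) (hx : x ∈ S),
        γi.symm x = Fin.castAdd M.sum (e.symm ⟨x, hx⟩) := by
      intro x hx
      rw [Equiv.symm_apply_eq, hγl]
      simp
    have hkeySc : ∀ (x : Fin (L.sum + M.sum)) (hx : x ∈ Sᶜ),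
        γi.symm x = Fin.natAdd L.sum (f.symm ⟨x, hx⟩) := by
      intro x hx
      rw [Equiv.symm_apply_eq, hγr]
      simp
    -- the inner permutations
    have hmem1 : ∀ i : Fin L.sum, δ⁻¹ (Fin.castAdd M.sum i) ∈ S := by
      intro i
      rw [hmemS, Equiv.Perm.inv_def, Equiv.apply_symm_apply]
      simpa using i.isLt
    have hmem2 : ∀ j : Fin M.sum, δ⁻¹ (Fin.natAdd L.sum j) ∈ Sᶜ := by
      intro j
      rw [Finset.mem_compl, hmemS, Equiv.Perm.inv_def, Equiv.apply_symm_apply]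
      simp
    set g : Fin L.sum → Fin L.sum :=
      fun i => e.symm ⟨δ⁻¹ (Fin.castAdd M.sum i), hmem1 i⟩ with hgdef
    set h : Fin M.sum → Fin M.sum :=
      fun j => f.symm ⟨δ⁻¹ (Fin.natAdd L.sum j), hmem2 j⟩ with hhdef
    have hginj : Function.Injective g := by
      intro x y hxy
      have h1 := e.symm.injective hxy
      have h2 : δ⁻¹ (Fin.castAdd M.sum x) = δ⁻¹ (Fin.castAdd M.sum y) :=
        congrArg Subtype.val h1
      have h3 := (δ⁻¹).injective h2
      exact Fin.castAdd_inj.mp h3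
    have hhinj : Function.Injective h := by
      intro x y hxy
      have h1 := f.symm.injective hxy
      have h2 : δ⁻¹ (Fin.natAdd L.sum x) = δ⁻¹ (Fin.natAdd L.sum y) :=
        congrArg Subtype.val h1
      have h3 := (δ⁻¹).injective h2
      have h4 : ((Fin.natAdd L.sum x : Fin (L.sum + M.sum)) : ℕ) =
          ((Fin.natAdd L.sum y : Fin (L.sum + M.sum)) : ℕ) := congrArg Fin.val h3
      simp only [Fin.coe_natAdd] at h4
      exact Fin.ext (by omega)
    set α : Equiv.Perm (Fin L.sum) :=
      (Equiv.ofBijective g (Finite.injective_iff_bijective.mp hginj)).symm with hα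
    set β : Equiv.Perm (Fin M.sum) :=
      (Equiv.ofBijective h (Finite.injective_iff_bijective.mp hhinj)).symm with hβ
    have hαinv : ∀ i, α⁻¹ i = g i := fun i => rfl
    have hβinv : ∀ j, β⁻¹ j = h j := fun j => rfl
    refine ⟨α, β, γi.symm, ?_, ?_, ?_, ?_⟩
    · -- α is an L-shuffle
      intro k a b ha hb hab
      rw [hαinv, hαinv]
      have hlt : δ⁻¹ (Fin.castAdd M.sum a) < δ⁻¹ (Fin.castAdd M.sum b) := by
        refine hδ k (Fin.castAdd M.sum a) (Fin.castAdd M.sum b) ?_ ?_ (by simpa using hab)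
        · rcases le_or_gt k L.length with hk | hk
          · rw [take_append_sum_of_le M hk]
            simpa using ha
          · exfalso
            rw [List.take_of_length_le (le_of_lt hk)] at ha
            exact absurd (lt_of_le_of_lt ha a.isLt) (lt_irrefl _)
        · rw [take_append_sum]
          simp only [Fin.coe_castAdd]
          exact lt_of_lt_of_le hb (Nat.le_add_right _ _)
      exact (OrderIso.lt_iff_lt e.symm).mpr (Subtype.mk_lt_mk.mpr hlt)
    · -- β is an M-shuffle
      intro k a b ha hb hab
      rw [hβinv, hβinv]
      have hlt : δ⁻¹ (Fin.natAdd L.sum a) < δ⁻¹ (Fin.natAdd L.sum b) := by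
        refine hδ (L.length + k) (Fin.natAdd L.sum a) (Fin.natAdd L.sum b) ?_ ?_ ?_
        · rw [take_append_sum_add]
          simp only [Fin.coe_natAdd]
          exact Nat.add_le_add_left ha _
        · rw [show L.length + k + 1 = L.length + (k + 1) from rfl, take_append_sum_add]
          simp only [Fin.coe_natAdd]
          exact Nat.add_lt_add_left hb _
        · simp only [Fin.coe_natAdd]
          exact Nat.add_lt_add_left hab _
      exact (OrderIso.lt_iff_lt f.symm).mpr (Subtype.mk_lt_mk.mpr hlt)
    · -- γ is an (n, m)-shuffle
      intro k a b ha hb hab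
      show γi a < γi b
      match k with
      | 0 =>
        have hbn : (b : ℕ) < L.sum := by simpa using hb
        have han : (a : ℕ) < L.sum := lt_trans hab hbn
        have ea : a = Fin.castAdd M.sum ⟨(a : ℕ), han⟩ := Fin.ext rfl
        have eb : b = Fin.castAdd M.sum ⟨(b : ℕ), hbn⟩ := Fin.ext rfl
        rw [ea, eb, hγl, hγl]
        exact Subtype.coe_lt_coe.mpr ((OrderIso.lt_iff_lt e).mpr (Fin.mk_lt_mk.mpr hab))
      | 1 =>
        have han : L.sum ≤ (a : ℕ) := by simpa using ha
        have haN := a.isLt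
        have hbN := b.isLt
        have ha2 : (a : ℕ) - L.sum < M.sum := by omega
        have hb2 : (b : ℕ) - L.sum < M.sum := by omega
        have hab2 : (a : ℕ) - L.sum < (b : ℕ) - L.sum := by omega
        have ea : a = Fin.natAdd L.sum ⟨(a : ℕ) - L.sum, ha2⟩ := Fin.ext (by simp; omega)
        have eb : b = Fin.natAdd L.sum ⟨(b : ℕ) - L.sum, hb2⟩ := Fin.ext (by simp; omega)
        rw [ea, eb, hγr, hγr]
        exact Subtype.coe_lt_coe.mpr ((OrderIso.lt_iff_lt f).mpr (Fin.mk_lt_mk.mpr hab2))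
      | (k + 2) =>
        exfalso
        have : L.sum + M.sum ≤ (a : ℕ) := by simpa [List.take] using ha
        exact absurd (lt_of_le_of_lt this a.isLt) (lt_irrefl _)
    · -- the product identity
      have hprod : ∀ x, (blockProd α β)⁻¹ (δ x) = γi.symm x := by
        intro x
        by_cases hx : x ∈ S
        · have hdx : (δ x : ℕ) < L.sum := (hmemS x).mp hx
          have e1 : δ x = Fin.castAdd M.sum ⟨(δ x : ℕ), hdx⟩ := Fin.ext rfl
          have e2 : δ⁻¹ (Fin.castAdd M.sum ⟨(δ x : ℕ), hdx⟩) = x := by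
            rw [← e1, Equiv.Perm.inv_def, Equiv.symm_apply_apply]
          have e3 : g ⟨(δ x : ℕ), hdx⟩ = e.symm ⟨x, hx⟩ := by
            rw [hgdef]
            exact congrArg _ (Subtype.ext e2)
          rw [e1, blockProd_inv_castAdd, hkeyS x hx, hαinv, e3]
        · have hx' : x ∈ Sᶜ := Finset.mem_compl.mpr hx
          have hdx : L.sum ≤ (δ x : ℕ) := by
            by_contra hcon
            exact hx ((hmemS x).mpr (by omega))
          have hdN := (δ x).isLt
          have hd2 : (δ x : ℕ) - L.sum < M.sum := by omega
          have e1 : δ x = Fin.natAdd L.sum ⟨(δ x : ℕ) - L.sum, hd2⟩ :=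
            Fin.ext (by simp; omega)
          have e2 : δ⁻¹ (Fin.natAdd L.sum ⟨(δ x : ℕ) - L.sum, hd2⟩) = x := by
            rw [← e1, Equiv.Perm.inv_def, Equiv.symm_apply_apply]
          have e3 : h ⟨(δ x : ℕ) - L.sum, hd2⟩ = f.symm ⟨x, hx'⟩ := by
            rw [hhdef]
            exact congrArg _ (Subtype.ext e2)
          rw [e1, blockProd_inv_natAdd, hkeySc x hx', hβinv, e3]
      have h3 : (blockProd α β)⁻¹ * δ = γi.symm := by
        apply Equiv.ext
        intro x
        rw [Equiv.Perm.mul_apply]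
        exact hprod x
      rw [← h3, mul_inv_cancel_left]
end

section
/- For n, m, r ≥ 1, the set equality (1_n × Sh(m,r)) · Sh(n, m+r) = (Sh(n,m) × 1_r) · Sh(n+m, r) holds, where both sides are subsets of S_{n+m+r}; moreover this set equals Sh(n,m,r), the set of (n,m,r)-shuffles. -/
/-- Transport of a permutation along an equality of sizes. -/
def permCast {a b : ℕ} (h : a = b) (σ : Equiv.Perm (Fin a)) : Equiv.Perm (Fin b) :=
  (finCongr h).permCongr σ

/-! An `L`-shuffle is a permutation whose inverse is increasing on each block of `L`. If
`δ = (ω × 1) * λ` and `λ⁻¹` is increasing on the first `n + m` positions, then there `δ⁻¹` is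
`λ⁻¹ ∘ ω⁻¹`, so it is increasing on the blocks of sizes `n` and `m` exactly when `ω⁻¹` is, while on
the last block `δ⁻¹` agrees with `λ⁻¹`. Every `δ` factors in this way: take for `ω` the permutation
sorting the values of `δ⁻¹` on the first `n + m` positions. The bracketing `1 × Sh(m,r)` is handled
in the same way, with the block of size `m + r` at the end. -/

open Equiv Function Set

theorem StrictMono.strictMonoOn_comp_iff {α β γ : Type*} [Preorder α] [LinearOrder β]
    [Preorder γ] {g : β → γ} {f : α → β} {s : Set α} (hg : StrictMono g) :
    StrictMonoOn (g ∘ f) s ↔ StrictMonoOn f s :=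
  ⟨fun h _ ha _ hb hab => hg.lt_iff_lt.1 (h ha hb hab), hg.comp_strictMonoOn⟩

theorem Equiv.Perm.inv_mul_comp_of_semiconj {α β : Type*} {e : β → α} {π : Perm β}
    {P : Perm α} (h : Semiconj e π P) (σ : Perm α) : ⇑(P * σ)⁻¹ ∘ e = (⇑σ⁻¹ ∘ e) ∘ ⇑π⁻¹ := by
  have h' : Semiconj e ⇑π⁻¹ ⇑P⁻¹ := h.inverses_right π.apply_symm_apply P.symm_apply_apply
  funext x
  simp only [comp_apply, mul_inv_rev, Perm.mul_apply, h' x]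

theorem exists_perm_strictMono_comp {q : ℕ} {α : Type*} [LinearOrder α] {f : Fin q → α}
    (hf : Injective f) : ∃ π : Perm (Fin q), StrictMono (f ∘ π) :=
  ⟨Tuple.sort f, (Tuple.monotone_sort f).strictMono_of_injective (hf.comp (Tuple.sort f).injective)⟩

theorem exists_mul_factorization_iff {q N : ℕ} {e : Fin q → Fin N} (he : Injective e)
    {B : Perm (Fin q) → Perm (Fin N)} (hB : ∀ π : Perm (Fin q), Semiconj e π (B π))
    {S : Perm (Fin q) → Prop} {R Q : Perm (Fin N) → Prop}
    (hR : ∀ σ, R σ → StrictMono (⇑σ⁻¹ ∘ e))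
    (hQ : ∀ (π : Perm (Fin q)) (σ : Perm (Fin N)),
      StrictMono (⇑σ⁻¹ ∘ e) → (Q (B π * σ) ↔ S π ∧ R σ))
    (δ : Perm (Fin N)) :
    (∃ π σ, S π ∧ R σ ∧ δ = B π * σ) ↔ Q δ := by
  constructor
  · rintro ⟨π, σ, hS, hσ, rfl⟩
    exact (hQ π σ (hR σ hσ)).2 ⟨hS, hσ⟩
  · intro hδ
    obtain ⟨π, hπ⟩ := exists_perm_strictMono_comp ((δ⁻¹).injective.comp he)
    have hδσ : δ = B π * ((B π)⁻¹ * δ) := (mul_inv_cancel_left _ _).symm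
    have hσ : StrictMono (⇑((B π)⁻¹ * δ)⁻¹ ∘ e) := by
      convert hπ using 1
      funext x
      simp [(hB π x).symm]
    rw [hδσ, hQ π _ hσ] at hδ
    exact ⟨π, _, hδ.1, hδ.2, hδσ⟩

section Shuffles

variable {N : ℕ}

theorem isCompShuffle_iff_forall_strictMonoOn {L : List ℕ} {σ : Perm (Fin N)} :
    IsCompShuffle N L σ ↔
      ∀ k, StrictMonoOn ⇑σ⁻¹ (Fin.val ⁻¹' Ico (L.take k).sum (L.take (k + 1)).sum) := by
  refine forall_congr' fun k => ⟨fun h i hi j hj hij => h i j hi.1 hj.2 hij, ?_⟩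
  intro h i j hi hj hij
  exact h ⟨hi, by omega⟩ ⟨by omega, hj⟩ hij

theorem isCompShuffle_pair_iff {a b : ℕ} {σ : Perm (Fin N)} :
    IsCompShuffle N [a, b] σ ↔ StrictMonoOn ⇑σ⁻¹ (Fin.val ⁻¹' Ico 0 a) ∧
      StrictMonoOn ⇑σ⁻¹ (Fin.val ⁻¹' Ico a (a + b)) := by
  rw [isCompShuffle_iff_forall_strictMonoOn]
  refine ⟨fun h => ⟨by simpa using h 0, by simpa using h 1⟩, ?_⟩
  rintro ⟨h₀, h₁⟩ (_ | _ | k)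
  · simpa using h₀
  · simpa using h₁
  · simp [StrictMonoOn]

theorem isCompShuffle_triple_iff {a b c : ℕ} {σ : Perm (Fin N)} :
    IsCompShuffle N [a, b, c] σ ↔ StrictMonoOn ⇑σ⁻¹ (Fin.val ⁻¹' Ico 0 a) ∧
      StrictMonoOn ⇑σ⁻¹ (Fin.val ⁻¹' Ico a (a + b)) ∧
      StrictMonoOn ⇑σ⁻¹ (Fin.val ⁻¹' Ico (a + b) (a + b + c)) := by
  rw [isCompShuffle_iff_forall_strictMonoOn]
  refine ⟨fun h => ⟨by simpa using h 0, by simpa using h 1, by simpa [add_assoc] using h 2⟩, ?_⟩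
  rintro ⟨h₀, h₁, h₂⟩ (_ | _ | _ | k)
  · simpa using h₀
  · simpa using h₁
  · simpa [add_assoc] using h₂
  · simp [StrictMonoOn]

end Shuffles

section Transfer

variable {α : Type*} [Preorder α]

theorem strictMonoOn_comp_iff_of_val_eq_add {q N p a b : ℕ} {e : Fin q → Fin N}
    (he : ∀ i, (e i : ℕ) = p + i) (hb : b ≤ q) (f : Fin N → α) :
    StrictMonoOn (f ∘ e) (Fin.val ⁻¹' Ico a b) ↔
      StrictMonoOn f (Fin.val ⁻¹' Ico (p + a) (p + b)) := by
  have he_lt : ∀ {i j}, e i < e j ↔ i < j := by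
    intro i j
    rw [Fin.lt_def, Fin.lt_def, he, he]
    omega
  have he_mem : ∀ {i c d}, e i ∈ Fin.val ⁻¹' Ico (p + c) (p + d) ↔ i ∈ Fin.val ⁻¹' Ico c d := by
    intro i c d
    simp only [mem_preimage, mem_Ico, he]
    omega
  refine ⟨fun h x hx y hy hxy => ?_, fun h i hi j hj hij => h (he_mem.2 hi) (he_mem.2 hj) ?_⟩
  · have hrange : ∀ z ∈ Fin.val ⁻¹' Ico (p + a) (p + b), ∃ i, e i = z := fun z hz =>
      ⟨⟨z - p, by simp only [mem_preimage, mem_Ico] at hz; omega⟩,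
        Fin.ext (by simp only [mem_preimage, mem_Ico] at hz; rw [he, Fin.val_mk]; omega)⟩
    obtain ⟨i, rfl⟩ := hrange x hx
    obtain ⟨j, rfl⟩ := hrange y hy
    exact h (he_mem.1 hx) (he_mem.1 hy) (he_lt.1 hxy)
  · exact he_lt.2 hij

theorem strictMonoOn_preimage_val_Ico_zero_iff {q : ℕ} {f : Fin q → α} :
    StrictMonoOn f (Fin.val ⁻¹' Ico 0 q) ↔ StrictMono f := by
  rw [← strictMonoOn_univ]
  congr!
  ext i
  simp [i.isLt]

theorem strictMonoOn_comp_castAdd_iff {n m a b : ℕ} (hb : b ≤ n) (f : Fin (n + m) → α) :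
    StrictMonoOn (f ∘ Fin.castAdd m) (Fin.val ⁻¹' Ico a b) ↔
      StrictMonoOn f (Fin.val ⁻¹' Ico a b) := by
  simpa only [zero_add] using
    strictMonoOn_comp_iff_of_val_eq_add (e := Fin.castAdd m) (p := 0) (fun _ => (zero_add _).symm)
      hb f

theorem strictMonoOn_comp_natAdd_iff {n m a b : ℕ} (hb : b ≤ m) (f : Fin (n + m) → α) :
    StrictMonoOn (f ∘ Fin.natAdd n) (Fin.val ⁻¹' Ico a b) ↔
      StrictMonoOn f (Fin.val ⁻¹' Ico (n + a) (n + b)) :=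
  strictMonoOn_comp_iff_of_val_eq_add (fun _ => rfl) hb f

theorem strictMono_comp_castAdd_iff {n m : ℕ} (f : Fin (n + m) → α) :
    StrictMono (f ∘ Fin.castAdd m) ↔ StrictMonoOn f (Fin.val ⁻¹' Ico 0 n) := by
  rw [← strictMonoOn_preimage_val_Ico_zero_iff, strictMonoOn_comp_castAdd_iff le_rfl]

theorem strictMono_comp_natAdd_iff {n m : ℕ} (f : Fin (n + m) → α) :
    StrictMono (f ∘ Fin.natAdd n) ↔ StrictMonoOn f (Fin.val ⁻¹' Ico n (n + m)) := by
  rw [← strictMonoOn_preimage_val_Ico_zero_iff, strictMonoOn_comp_natAdd_iff le_rfl, add_zero]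

end Transfer

theorem isCompShuffle_pair_iff_strictMono {a b : ℕ} {σ : Perm (Fin (a + b))} :
    IsCompShuffle (a + b) [a, b] σ ↔
      StrictMono (⇑σ⁻¹ ∘ Fin.castAdd b) ∧ StrictMono (⇑σ⁻¹ ∘ Fin.natAdd a) := by
  rw [isCompShuffle_pair_iff, strictMono_comp_castAdd_iff, strictMono_comp_natAdd_iff]

theorem isCompShuffle_permCast_iff {a b : ℕ} (h : a = b) {L : List ℕ} {σ : Perm (Fin a)} :
    IsCompShuffle b L (permCast h σ) ↔ IsCompShuffle a L σ := by
  subst h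
  rfl

section BlockProd

variable {n m : ℕ} (σ : Perm (Fin n)) (τ : Perm (Fin m))

theorem blockProd_semiconj_castAdd : Semiconj (Fin.castAdd m) σ (blockProd σ τ) := fun i => by
  simp [blockProd, Equiv.permCongr_apply, ← finSumFinEquiv_apply_left]

theorem blockProd_semiconj_natAdd : Semiconj (Fin.natAdd n) τ (blockProd σ τ) := fun i => by
  simp [blockProd, Equiv.permCongr_apply, ← finSumFinEquiv_apply_right]

end BlockProd

theorem permCast_injective {a b : ℕ} (h : a = b) : Injective (permCast h) :=
  (finCongr h).permCongr.injective

theorem permCast_surjective {a b : ℕ} (h : a = b) : Surjective (permCast h) :=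
  (finCongr h).permCongr.surjective

section Factorizations

variable {n m r : ℕ}

theorem isCompShuffle_blockProd_one_left_mul_iff (τ : Perm (Fin (m + r)))
    (σ : Perm (Fin (n + (m + r)))) (hσ : StrictMono (⇑σ⁻¹ ∘ Fin.natAdd n)) :
    IsCompShuffle (n + (m + r)) [n, m, r] (blockProd 1 τ * σ) ↔
      IsCompShuffle (m + r) [m, r] τ ∧ IsCompShuffle (n + (m + r)) [n, m + r] σ := by
  set δ := blockProd (1 : Perm (Fin n)) τ * σ
  have h_castAdd : ⇑δ⁻¹ ∘ Fin.castAdd (m + r) = ⇑σ⁻¹ ∘ Fin.castAdd (m + r) := by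
    simpa only [inv_one, Perm.coe_one, comp_id] using
      Perm.inv_mul_comp_of_semiconj (blockProd_semiconj_castAdd 1 τ) σ
  have h_natAdd := Perm.inv_mul_comp_of_semiconj (blockProd_semiconj_natAdd 1 τ) σ
  have h₁ : StrictMonoOn ⇑δ⁻¹ (Fin.val ⁻¹' Ico 0 n) ↔
      StrictMono (⇑σ⁻¹ ∘ Fin.castAdd (m + r)) := by
    rw [← strictMono_comp_castAdd_iff, h_castAdd]
  have h₂ : StrictMonoOn ⇑δ⁻¹ (Fin.val ⁻¹' Ico n (n + m)) ↔
      StrictMonoOn ⇑τ⁻¹ (Fin.val ⁻¹' Ico 0 m) := by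
    rw [← hσ.strictMonoOn_comp_iff, ← h_natAdd, strictMonoOn_comp_natAdd_iff (Nat.le_add_right m r),
      add_zero]
  have h₃ : StrictMonoOn ⇑δ⁻¹ (Fin.val ⁻¹' Ico (n + m) (n + m + r)) ↔
      StrictMonoOn ⇑τ⁻¹ (Fin.val ⁻¹' Ico m (m + r)) := by
    rw [← hσ.strictMonoOn_comp_iff, ← h_natAdd, strictMonoOn_comp_natAdd_iff le_rfl, add_assoc]
  rw [isCompShuffle_triple_iff, isCompShuffle_pair_iff, isCompShuffle_pair_iff_strictMono, h₁, h₂,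
    h₃]
  tauto

theorem isCompShuffle_blockProd_one_right_mul_iff (ω : Perm (Fin (n + m)))
    (lam : Perm (Fin (n + m + r))) (hlam : StrictMono (⇑lam⁻¹ ∘ Fin.castAdd r)) :
    IsCompShuffle (n + m + r) [n, m, r] (blockProd ω 1 * lam) ↔
      IsCompShuffle (n + m) [n, m] ω ∧ IsCompShuffle (n + m + r) [n + m, r] lam := by
  set δ := blockProd ω (1 : Perm (Fin r)) * lam
  have h_castAdd := Perm.inv_mul_comp_of_semiconj (blockProd_semiconj_castAdd ω 1) lam
  have h_natAdd : ⇑δ⁻¹ ∘ Fin.natAdd (n + m) = ⇑lam⁻¹ ∘ Fin.natAdd (n + m) := by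
    simpa only [inv_one, Perm.coe_one, comp_id] using
      Perm.inv_mul_comp_of_semiconj (blockProd_semiconj_natAdd ω 1) lam
  have h₁ : StrictMonoOn ⇑δ⁻¹ (Fin.val ⁻¹' Ico 0 n) ↔
      StrictMonoOn ⇑ω⁻¹ (Fin.val ⁻¹' Ico 0 n) := by
    rw [← strictMonoOn_comp_castAdd_iff (Nat.le_add_right n m), h_castAdd,
      hlam.strictMonoOn_comp_iff]
  have h₂ : StrictMonoOn ⇑δ⁻¹ (Fin.val ⁻¹' Ico n (n + m)) ↔
      StrictMonoOn ⇑ω⁻¹ (Fin.val ⁻¹' Ico n (n + m)) := by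
    rw [← strictMonoOn_comp_castAdd_iff le_rfl, h_castAdd, hlam.strictMonoOn_comp_iff]
  have h₃ : StrictMonoOn ⇑δ⁻¹ (Fin.val ⁻¹' Ico (n + m) (n + m + r)) ↔
      StrictMono (⇑lam⁻¹ ∘ Fin.natAdd (n + m)) := by
    rw [← strictMono_comp_natAdd_iff, h_natAdd]
  rw [isCompShuffle_triple_iff, isCompShuffle_pair_iff, isCompShuffle_pair_iff_strictMono, h₁, h₂,
    h₃]
  tauto

end Factorizations

/-- `(1_n × Sh(m,r)) · Sh(n,m+r) = (Sh(n,m) × 1_r) · Sh(n+m,r) = Sh(n,m,r)`. -/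
theorem shuffle_associativity_sets (n m r : ℕ)
    (δ : Equiv.Perm (Fin (n + m + r))) :
    ((∃ (τ : Equiv.Perm (Fin (m + r))) (σ : Equiv.Perm (Fin (n + (m + r)))),
        IsCompShuffle (m + r) [m, r] τ ∧ IsCompShuffle (n + (m + r)) [n, m + r] σ ∧
        δ = permCast (by omega) (blockProd (1 : Equiv.Perm (Fin n)) τ * σ)) ↔
      IsCompShuffle (n + m + r) [n, m, r] δ) ∧
    ((∃ (ω : Equiv.Perm (Fin (n + m))) (lam : Equiv.Perm (Fin (n + m + r))),
        IsCompShuffle (n + m) [n, m] ω ∧ IsCompShuffle (n + m + r) [n + m, r] lam ∧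
        δ = blockProd ω (1 : Equiv.Perm (Fin r)) * lam) ↔
      IsCompShuffle (n + m + r) [n, m, r] δ) := by
  have h : n + (m + r) = n + m + r := (add_assoc n m r).symm
  refine ⟨?_, exists_mul_factorization_iff (Fin.castAdd_injective _ _)
    (blockProd_semiconj_castAdd · 1) (fun _ hlam => (isCompShuffle_pair_iff_strictMono.1 hlam).1)
    isCompShuffle_blockProd_one_right_mul_iff δ⟩
  obtain ⟨δ, rfl⟩ := permCast_surjective h δ
  simpa only [isCompShuffle_permCast_iff, (permCast_injective h).eq_iff] using
    exists_mul_factorization_iff (Fin.strictMono_natAdd n).injective (blockProd_semiconj_natAdd 1)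
      (fun _ hσ => (isCompShuffle_pair_iff_strictMono.1 hσ).2)
      isCompShuffle_blockProd_one_left_mul_iff δ
end

section
/- Define for a nondecreasing function f↑ : {1,...,n} → {1,...,n} the function Park(f↑) by Park(f↑)(1) = 1 and Park(f↑)(j) = min(Park(f↑)(j-1) + f↑(j) - f↑(j-1), j) for j > 1. Then for any parking function f = f↑ ∘ σ with σ a permutation: (a) f(i) = f(j) iff Park(f)(i) = Park(f)(j), and (b) f(i) < f(j) iff Park(f)(i) < Park(f)(j), where Park(f) := Park(f↑) ∘ σ. -/
/-- `Park` of a nondecreasing function (0-indexed values):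
`Park(g)(0) = 0`, `Park(g)(j) = min(Park(g)(j-1) + g(j) - g(j-1), j)`. -/
def parkMono (g : ℕ → ℕ) : ℕ → ℕ
  | 0 => 0
  | j + 1 => min (parkMono g j + (g (j + 1) - g j)) (j + 1)

/-- Extension of `f : Fin n → Fin n` to an ℕ-valued function. -/
def extVal {n : ℕ} (f : Fin n → Fin n) : ℕ → ℕ :=
  fun k => if h : k < n then (f ⟨k, h⟩ : ℕ) else 0

/-! `Park(f↑)` never decreases, climbs at every step where `f↑` climbs, and never climbs by more
than `f↑` does, so it stays put wherever `f↑` does. Hence `Park(f↑)` and `f↑` induce the same weak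
order on positions, and precomposing both with `σ` preserves this. -/

section parkMono

variable {g : ℕ → ℕ} {a b k : ℕ}

theorem parkMono_le_self (g : ℕ → ℕ) : ∀ k, parkMono g k ≤ k
  | 0 => le_rfl
  | _ + 1 => min_le_right _ _

theorem parkMono_monotone (g : ℕ → ℕ) : Monotone (parkMono g) :=
  monotone_nat_of_le_succ fun k => by
    have := parkMono_le_self g k
    simp only [parkMono]
    omega

theorem parkMono_lt_succ (h : g k < g (k + 1)) : parkMono g k < parkMono g (k + 1) := by
  have := parkMono_le_self g k
  simp only [parkMono]
  omega

/-- A rise of `g` on `[a, b]` contains a rising step. -/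
theorem parkMono_lt_of_lt (hab : a ≤ b) (h : g a < g b) : parkMono g a < parkMono g b := by
  induction b, hab using Nat.le_induction with
  | base => exact absurd h (lt_irrefl _)
  | succ b hab ih =>
    rcases lt_or_ge (g a) (g b) with hlt | hge
    · exact (ih hlt).trans_le (parkMono_monotone g b.le_succ)
    · exact (parkMono_monotone g hab).trans_lt (parkMono_lt_succ (by omega))

theorem parkMono_add_le (hab : a ≤ b) (hg : MonotoneOn g (Set.Icc a b)) :
    parkMono g b + g a ≤ parkMono g a + g b := by
  induction b, hab using Nat.le_induction with
  | base => rfl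
  | succ b hab ih =>
    have hstep : g b ≤ g (b + 1) :=
      hg ⟨hab, b.le_succ⟩ ⟨hab.trans b.le_succ, le_rfl⟩ b.le_succ
    have := ih (hg.mono (Set.Icc_subset_Icc_right b.le_succ))
    have := min_le_left (parkMono g b + (g (b + 1) - g b)) (b + 1)
    simp only [parkMono]
    omega

theorem parkMono_eq_of_eq (hab : a ≤ b) (hg : MonotoneOn g (Set.Icc a b)) (h : g a = g b) :
    parkMono g a = parkMono g b :=
  le_antisymm (parkMono_monotone g hab) (by have := parkMono_add_le hab hg; omega)

theorem parkMono_le_parkMono_iff {n : ℕ} (hg : MonotoneOn g (Set.Iio n)) (ha : a < n)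
    (hb : b < n) : parkMono g a ≤ parkMono g b ↔ g a ≤ g b := by
  have hIcc : ∀ {x y}, y < n → MonotoneOn g (Set.Icc x y) := fun hy =>
    hg.mono fun _ hz => lt_of_le_of_lt hz.2 hy
  constructor
  · intro hp
    by_contra! hba
    exact hp.not_gt (parkMono_lt_of_lt (hg.reflect_lt hb ha hba).le hba)
  · intro hab
    rcases hab.lt_or_eq with hlt | heq
    · exact (parkMono_lt_of_lt (hg.reflect_lt ha hb hlt).le hlt).le
    · rcases le_total a b with hle | hle
      · exact (parkMono_eq_of_eq hle (hIcc hb) heq).le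
      · exact (parkMono_eq_of_eq hle (hIcc ha) heq.symm).ge

end parkMono

theorem extVal_val {n : ℕ} (f : Fin n → Fin n) (k : Fin n) : extVal f k = f k := by
  simp [extVal]

theorem extVal_monotoneOn {n : ℕ} {f : Fin n → Fin n} (hf : Monotone f) :
    MonotoneOn (extVal f) (Set.Iio n) := by
  intro x hx y hy hxy
  simp only [extVal, Set.mem_Iio.mp hx, Set.mem_Iio.mp hy, dite_true, Fin.val_fin_le]
  exact hf hxy

theorem park_preserves_relative_order_general (n : ℕ) (g : Fin n → Fin n)
    (σ : Equiv.Perm (Fin n)) (hmono : Monotone g) :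
    ∀ i j : Fin n,
      ((g ∘ σ) i = (g ∘ σ) j ↔
        parkMono (extVal g) (σ i) = parkMono (extVal g) (σ j)) ∧
      (((g ∘ σ) i : ℕ) < ((g ∘ σ) j : ℕ) ↔
        parkMono (extVal g) (σ i) < parkMono (extVal g) (σ j)) := by
  have key : ∀ a b : Fin n, parkMono (extVal g) a ≤ parkMono (extVal g) b ↔ g a ≤ g b := by
    intro a b
    rw [parkMono_le_parkMono_iff (extVal_monotoneOn hmono) a.isLt b.isLt, extVal_val,
      extVal_val, Fin.val_fin_le]
  intro i j
  simp only [Function.comp_apply, le_antisymm_iff, key, lt_iff_not_ge, Fin.val_fin_le, and_self]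

/-- For a parking function `f = f↑ ∘ σ` (with `f↑ = g` nondecreasing, `g(i) ≤ i`,
`σ` a permutation) and `Park(f) := Park(f↑) ∘ σ`:
(a) `f(i) = f(j)` iff `Park(f)(i) = Park(f)(j)`, and
(b) `f(i) < f(j)` iff `Park(f)(i) < Park(f)(j)`. -/
theorem park_preserves_relative_order (n : ℕ) (g : Fin n → Fin n)
    (σ : Equiv.Perm (Fin n)) (hmono : Monotone g)
    (hpark : ∀ i : Fin n, (g i : ℕ) ≤ (i : ℕ)) :
    ∀ i j : Fin n,
      ((g ∘ σ) i = (g ∘ σ) j ↔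
        parkMono (extVal g) (σ i) = parkMono (extVal g) (σ j)) ∧
      (((g ∘ σ) i : ℕ) < ((g ∘ σ) j : ℕ) ↔
        parkMono (extVal g) (σ i) < parkMono (extVal g) (σ j)) :=
  park_preserves_relative_order_general n g σ hmono
end

section
/- If f is a parking function of length n and g is a parking function of length m, then the concatenation f × g : {1,...,n+m} → {1,...,n+m}, defined by (f × g)(i) = f(i) for i ≤ n and (f × g)(i) = g(i-n) + n for i > n, is a parking function of length n+m. Moreover, for any (n,m)-shuffle γ, the function (f × g) ∘ γ is also a parking function. -/
/-- `f` is a parking function: its nondecreasing rearrangement `g` satisfies `g(i) ≤ i`. -/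
def IsParking {n : ℕ} (f : Fin n → Fin n) : Prop :=
  ∃ (g : Fin n → Fin n) (σ : Equiv.Perm (Fin n)),
    Monotone g ∧ (∀ i : Fin n, (g i : ℕ) ≤ (i : ℕ)) ∧ f = g ∘ σ

/-- Concatenation `f × g` of `f : {1,…,n} → {1,…,n}` and `g : {1,…,m} → {1,…,m}`. -/
def concatF {n m : ℕ} (f : Fin n → Fin n) (g : Fin m → Fin m) :
    Fin (n + m) → Fin (n + m) := fun i =>
  if h : (i : ℕ) < n then
    ⟨(f ⟨i, h⟩ : ℕ), Nat.lt_of_lt_of_le (f ⟨i, h⟩).isLt (Nat.le_add_right n m)⟩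
  else
    ⟨n + (g ⟨(i : ℕ) - n, by have := i.isLt; omega⟩ : ℕ),
      Nat.add_lt_add_left (g ⟨(i : ℕ) - n, by have := i.isLt; omega⟩).isLt n⟩

/-! If `f = f' ∘ σ` and `g = g' ∘ τ` with `f'`, `g'` monotone and below the identity, then
`f × g = (f' × g') ∘ (σ ⊕ τ)`, and `f' × g'` is again monotone and below the identity because
its second block is shifted up by `n`. A shuffle is a permutation, and parking functions are
closed under precomposition with any permutation. -/

theorem IsParking.comp_perm {n : ℕ} {f : Fin n → Fin n} (hf : IsParking f)
    (γ : Equiv.Perm (Fin n)) : IsParking (f ∘ γ) := by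
  obtain ⟨g, σ, hmono, hle, rfl⟩ := hf
  exact ⟨g, γ.trans σ, hmono, hle, rfl⟩

section concatF

variable {n m : ℕ} (f : Fin n → Fin n) (g : Fin m → Fin m)

@[simp]
theorem concatF_castAdd (i : Fin n) : concatF f g (Fin.castAdd m i) = Fin.castAdd m (f i) := by
  ext; simp [concatF]

@[simp]
theorem concatF_natAdd (j : Fin m) : concatF f g (Fin.natAdd n j) = Fin.natAdd n (g j) := by
  ext; simp [concatF]

theorem concatF_comp_perm (σ : Equiv.Perm (Fin n)) (τ : Equiv.Perm (Fin m)) :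
    concatF (f ∘ σ) (g ∘ τ) = concatF f g ∘ finSumFinEquiv.permCongr (σ.sumCongr τ) := by
  funext k
  induction k using Fin.addCases <;> simp

variable {f g}

theorem concatF_monotone (hf : Monotone f) (hg : Monotone g) : Monotone (concatF f g) := by
  intro a b hab
  induction a using Fin.addCases <;> induction b using Fin.addCases
  · simp only [concatF_castAdd, (Fin.strictMono_castAdd m).le_iff_le] at hab ⊢
    exact hf hab
  · simp only [concatF_castAdd, concatF_natAdd, Fin.le_def, Fin.val_castAdd, Fin.val_natAdd]
    omega
  · simp only [Fin.le_def, Fin.val_natAdd, Fin.val_castAdd] at hab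
    omega
  · simp only [concatF_natAdd, Fin.natAdd_le_natAdd_iff] at hab ⊢
    exact hg hab

theorem concatF_val_le (hf : ∀ i, (f i : ℕ) ≤ i) (hg : ∀ j, (g j : ℕ) ≤ j) (k : Fin (n + m)) :
    (concatF f g k : ℕ) ≤ k := by
  induction k using Fin.addCases
  · simpa using hf _
  · simpa using hg _

theorem IsParking.concat (hf : IsParking f) (hg : IsParking g) : IsParking (concatF f g) := by
  obtain ⟨f', σ, hf'mono, hf'le, rfl⟩ := hf
  obtain ⟨g', τ, hg'mono, hg'le, rfl⟩ := hg
  exact ⟨concatF f' g', _, concatF_monotone hf'mono hg'mono, concatF_val_le hf'le hg'le,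
    concatF_comp_perm f' g' σ τ⟩

end concatF

/-- The concatenation of parking functions is a parking function, and so is its
composition with any `(n,m)`-shuffle. -/
theorem parking_concat_shuffle (n m : ℕ) (f : Fin n → Fin n) (g : Fin m → Fin m)
    (hf : IsParking f) (hg : IsParking g) :
    IsParking (concatF f g) ∧
    ∀ γ : Equiv.Perm (Fin (n + m)), IsCompShuffle (n + m) [n, m] γ →
      IsParking (concatF f g ∘ γ) :=
  ⟨hf.concat hg, fun γ _ => (hf.concat hg).comp_perm γ⟩
end

section
/- An integer b with 0 < b < n is a breakpoint of a parking function f of length n (i.e. |{i : f(i) ≤ b}| = b) if and only if there exist parking functions f₁ of length b and f₂ of length n-b and a (b, n-b)-shuffle σ such that f = (f₁ × f₂) ∘ σ. -/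
/-!
A function `f : Fin n → Fin n` is parking iff it passes the counting test
`k ≤ #{i | f i < k}` for every `k ≤ n`. If `b` is a breakpoint, stably sorting `f` by the
predicate `f i < b` is a `(b, n-b)`-shuffle that moves the `b` entries with values below `b` to
the front, after which `f` is visibly a concatenation `f₁ × f₂`. Below `k ≤ b` the counts of
`f₁ × f₂` are those of `f₁`, below `b + k` they are `b` plus those of `f₂`, so the counting test
passes from `f` to `f₁` and `f₂`. Conversely the values of `f₁ × f₂` below `b` are exactly the
`b` values of `f₁`.
-/

open Finset

lemma card_filter_comp_equiv {α β : Type*} [Fintype α] [Fintype β] (e : α ≃ β)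
    (p : β → Prop) [DecidablePred p] : #{a | p (e a)} = #{b | p b} := by
  rw [← Fintype.card_subtype, ← Fintype.card_subtype]
  exact Fintype.card_congr (e.subtypeEquiv fun _ => Iff.rfl)

lemma Fin.card_filter_univ_add {b m : ℕ} (p : Fin (b + m) → Prop) [DecidablePred p] :
    #{i | p i} = #{j | p (Fin.castAdd m j)} + #{j | p (Fin.natAdd b j)} := by
  simp only [card_filter, Fin.sum_univ_add]

theorem isParking_iff_le_card {n : ℕ} (f : Fin n → Fin n) :
    IsParking f ↔ ∀ k ≤ n, k ≤ #{i | (f i : ℕ) < k} := by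
  constructor
  · rintro ⟨g, σ, -, hg, rfl⟩ k hk
    calc k = #{i : Fin n | (i : ℕ) < k} := by rw [Fin.card_filter_val_lt, min_eq_right hk]
      _ ≤ #{i | (g i : ℕ) < k} :=
        card_le_card fun i => by simpa only [mem_filter_univ] using (hg i).trans_lt
      _ = #{i | (g (σ i) : ℕ) < k} := (card_filter_comp_equiv σ _).symm
  · intro hf
    set τ := Tuple.sort f
    refine ⟨f ∘ τ, τ⁻¹, Tuple.monotone_sort f, fun i => ?_, by ext; simp⟩
    have hmono : Monotone fun j => (f (τ j) : ℕ) :=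
      Fin.val_strictMono.monotone.comp (Tuple.monotone_sort f)
    have hlt := (Tuple.lt_card_lt_iff_apply_lt_of_monotone (j := i) (a := (i : ℕ) + 1) hmono).mp
      (by rw [card_filter_comp_equiv τ fun j => (f j : ℕ) < i + 1]; exact hf _ i.isLt)
    simp only [Function.comp_apply]
    omega

section Concat

variable {b m : ℕ} (f₁ : Fin b → Fin b) (f₂ : Fin m → Fin m)

@[simp]
lemma val_concatF_castAdd (j : Fin b) : (concatF f₁ f₂ (Fin.castAdd m j) : ℕ) = f₁ j := by
  simp [concatF]

@[simp]
lemma val_concatF_natAdd (j : Fin m) : (concatF f₁ f₂ (Fin.natAdd b j) : ℕ) = b + f₂ j := by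
  simp [concatF]

lemma card_filter_concatF_lt_of_le {k : ℕ} (hk : k ≤ b) :
    #{i | (concatF f₁ f₂ i : ℕ) < k} = #{j | (f₁ j : ℕ) < k} := by
  rw [Fin.card_filter_univ_add]
  simp only [val_concatF_castAdd, val_concatF_natAdd, add_eq_left, card_eq_zero,
    filter_eq_empty_iff]
  intro j _
  omega

lemma card_filter_concatF_lt_add (k : ℕ) :
    #{i | (concatF f₁ f₂ i : ℕ) < b + k} = b + #{j | (f₂ j : ℕ) < k} := by
  rw [Fin.card_filter_univ_add]
  simp only [val_concatF_castAdd, val_concatF_natAdd, add_lt_add_iff_left]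
  rw [filter_true_of_mem fun j _ => by omega, card_univ, Fintype.card_fin]

theorem isParking_concatF_iff : IsParking (concatF f₁ f₂) ↔ IsParking f₁ ∧ IsParking f₂ := by
  simp only [isParking_iff_le_card]
  constructor
  · intro h
    refine ⟨fun k hk => ?_, fun k hk => ?_⟩
    · rw [← card_filter_concatF_lt_of_le f₁ f₂ hk]
      exact h k (by omega)
    · have hcount := h (b + k) (by omega)
      rw [card_filter_concatF_lt_add] at hcount
      omega
  · rintro ⟨h₁, h₂⟩ k hk
    rcases le_or_gt k b with hkb | hbk
    · rw [card_filter_concatF_lt_of_le f₁ f₂ hkb]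
      exact h₁ k hkb
    · obtain ⟨k, rfl⟩ := Nat.exists_eq_add_of_le hbk.le
      rw [card_filter_concatF_lt_add]
      have hcount := h₂ k (by omega)
      omega

end Concat

lemma card_filter_lt_conj_finCongr {b m n : ℕ} (h : b + m = n) (F : Fin (b + m) → Fin (b + m))
    (σ : Equiv.Perm (Fin n)) (k : ℕ) :
    #{i | (finCongr h (F (finCongr h.symm (σ i))) : ℕ) < k} = #{i | (F i : ℕ) < k} := by
  simpa using card_filter_comp_equiv (σ.trans (finCongr h.symm)) fun i => (F i : ℕ) < k

lemma isParking_conj_finCongr_iff {b m n : ℕ} (h : b + m = n) (F : Fin (b + m) → Fin (b + m))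
    (σ : Equiv.Perm (Fin n)) :
    IsParking (fun i => finCongr h (F (finCongr h.symm (σ i)))) ↔ IsParking F := by
  simp only [isParking_iff_le_card, card_filter_lt_conj_finCongr, h]

lemma exists_eq_concatF {b m n : ℕ} (h : b + m = n) (g : Fin n → Fin n)
    (hg : ∀ j, (g j : ℕ) < b ↔ (j : ℕ) < b) :
    ∃ (f₁ : Fin b → Fin b) (f₂ : Fin m → Fin m),
      g = fun i => finCongr h (concatF f₁ f₂ (finCongr h.symm i)) := by
  subst h
  have hlow (j : Fin b) : (g (Fin.castAdd m j) : ℕ) < b := (hg _).2 j.isLt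
  have hhigh (j : Fin m) : b ≤ g (Fin.natAdd b j) := by
    simpa using (hg (Fin.natAdd b j)).not.2
  refine ⟨fun j => ⟨g (Fin.castAdd m j), hlow j⟩,
    fun j => ⟨g (Fin.natAdd b j) - b, by have := hhigh j; omega⟩, ?_⟩
  refine funext (Fin.addCases (fun j => Fin.ext ?_) (fun j => Fin.ext ?_))
  · simp
  · simpa using (Nat.add_sub_cancel' (hhigh j)).symm

lemma isCompShuffle_pair {n b m : ℕ} {σ : Equiv.Perm (Fin n)}
    (h : ∀ i j : Fin n, i < j → ((i : ℕ) < b ↔ (j : ℕ) < b) → σ⁻¹ i < σ⁻¹ j) :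
    IsCompShuffle n [b, m] σ := by
  rintro (_ | _ | k) i j hi hj hij <;>
    simp only [List.take_succ_cons, List.take_zero, List.take_nil, List.sum_cons,
      List.sum_nil] at hi hj
  · exact h i j hij (by omega)
  · exact h i j hij (by omega)
  · omega

lemma exists_isCompShuffle_lt_iff {n b : ℕ} (p : Fin n → Prop) [DecidablePred p]
    (hp : #{i | p i} = b) :
    ∃ σ : Equiv.Perm (Fin n), IsCompShuffle n [b, n - b] σ ∧ ∀ i, (σ i : ℕ) < b ↔ p i := by
  let c : Fin n → Bool := fun i => !decide (p i)
  have hc_lt (i : Fin n) : c i < true ↔ p i := by by_cases h : p i <;> simp [c, h]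
  have hc_eq (i j : Fin n) (h : p i ↔ p j) : c i = c j := by simp [c, h]
  -- `Tuple.sort` is stable, which is what makes `τ⁻¹` a shuffle.
  let τ := Tuple.sort c
  have hτ (j : Fin n) : (j : ℕ) < b ↔ p (τ j) := by
    have hsorted := Tuple.lt_card_lt_iff_apply_lt_of_monotone (j := j) (a := true)
      (Tuple.monotone_sort c)
    simp only [Function.comp_apply, hc_lt] at hsorted
    rwa [card_filter_comp_equiv τ p, hp] at hsorted
  refine ⟨τ⁻¹, isCompShuffle_pair fun i j hij hb => ?_, fun i => by simpa using hτ (τ⁻¹ i)⟩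
  rw [inv_inv]
  exact (Tuple.eq_sort_iff.mp rfl).2 i j hij (hc_eq _ _ (by rw [← hτ, ← hτ, hb]))

-- Values are 0-indexed: the paper's `f(i) ≤ b` reads `f i < b`.
/-- `b` (with `0 < b < n`) is a breakpoint of a parking function `f`
(`|{i : f(i) ≤ b}| = b`, stated 0-indexed as `|{i : f(i) < b}| = b`) iff
`f = (f₁ × f₂) ∘ σ` for parking functions `f₁, f₂` of lengths `b, n-b` and
a `(b, n-b)`-shuffle `σ`. -/
theorem breakpoint_iff_split (n : ℕ) (f : Fin n → Fin n) (hf : IsParking f)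
    (b : ℕ) (hbn : b < n) :
    (Finset.univ.filter fun i : Fin n => (f i : ℕ) < b).card = b ↔
      ∃ (f₁ : Fin b → Fin b) (f₂ : Fin (n - b) → Fin (n - b)) (σ : Equiv.Perm (Fin n)),
        IsParking f₁ ∧ IsParking f₂ ∧ IsCompShuffle n [b, n - b] σ ∧
        f = fun i : Fin n =>
          finCongr (by omega : b + (n - b) = n)
            (concatF f₁ f₂ (finCongr (by omega : n = b + (n - b)) (σ i))) := by
  have hb : b + (n - b) = n := by omega
  constructor
  · intro hcard
    obtain ⟨σ, hσ, hσf⟩ := exists_isCompShuffle_lt_iff (fun i => (f i : ℕ) < b) hcard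
    obtain ⟨f₁, f₂, hg⟩ := exists_eq_concatF hb (f ∘ σ.symm) fun j => by
      simpa using (hσf (σ.symm j)).symm
    have hfσ : f = fun i => finCongr hb (concatF f₁ f₂ (finCongr hb.symm (σ i))) := by
      funext i
      simpa using congrFun hg (σ i)
    have hpark : IsParking f₁ ∧ IsParking f₂ := by
      rw [← isParking_concatF_iff, ← isParking_conj_finCongr_iff hb _ σ, ← hfσ]
      exact hf
    exact ⟨f₁, f₂, σ, hpark.1, hpark.2, hσ, hfσ⟩
  · rintro ⟨f₁, f₂, σ, -, -, -, rfl⟩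
    rw [card_filter_lt_conj_finCongr, card_filter_concatF_lt_of_le f₁ f₂ le_rfl,
      filter_true_of_mem fun j _ => (f₁ j).isLt, card_univ, Fintype.card_fin]
end
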